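/- Suppose (Γ₁, Γ₂, τ) is a τ-orthogonal union of Belavin–Drinfeld triples (Γ₁⁽ⁱ⁾, Γ₂⁽ⁱ⁾, τ⁽ⁱ⁾). Then R̄_GGS − R_s = Σ_i (R̄⁽ⁱ⁾_GGS − R_s) and R̄_J − R_s = Σ_i (R̄⁽ⁱ⁾_J − R_s), where R̄_GGS, R̄_J are built from the union and R̄⁽ⁱ⁾_GGS, R̄⁽ⁱ⁾_J from the i-th subtriple. -/

import Mathlib

namespace GGS

open Finset
open scoped Classical

noncomputable section

/-- `n × n` complex matrices, `Mat_n(ℂ)`. -/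
abbrev MatN (n : ℕ) := Matrix (Fin n) (Fin n) ℂ
/-- `Mat_n(ℂ) ⊗ Mat_n(ℂ)`, realized as matrices indexed by pairs. -/
abbrev MatT (n : ℕ) := Matrix (Fin n × Fin n) (Fin n × Fin n) ℂ
/-- `Mat_n(ℂ)^{⊗3}`. -/
abbrev MatT3 (n : ℕ) := Matrix (Fin n × Fin n × Fin n) (Fin n × Fin n × Fin n) ℂ

/-- Matrix unit `E_{ij}` (ℕ-indices; `0` if out of range). -/
def E (n i j : ℕ) : MatN n := fun a b => if (a : ℕ) = i ∧ (b : ℕ) = j then 1 else 0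

/-- Tensor (Kronecker) product of two `n × n` matrices. -/
def tens {n : ℕ} (A B : MatN n) : MatT n := fun p q => A p.1 q.1 * B p.2 q.2

/-- `M₂₁` : swap of the two tensor factors. -/
def swap21 {n : ℕ} (M : MatT n) : MatT n := fun p q => M (p.2, p.1) (q.2, q.1)

/-- The permutation (Casimir) element `P = Σ E_{ij} ⊗ E_{ji}`. -/
def Pm (n : ℕ) : MatT n := ∑ i ∈ range n, ∑ j ∈ range n, tens (E n i j) (E n j i)

/-- `P⁰ = Σ E_{ii} ⊗ E_{ii}`. -/
def P0 (n : ℕ) : MatT n := ∑ i ∈ range n, tens (E n i i) (E n i i)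

/-- `M₁₂ = M ⊗ 1`. -/
def lift12 {n : ℕ} (M : MatT n) : MatT3 n :=
  fun p q => M (p.1, p.2.1) (q.1, q.2.1) * (if p.2.2 = q.2.2 then 1 else 0)

/-- `M₁₃`. -/
def lift13 {n : ℕ} (M : MatT n) : MatT3 n :=
  fun p q => M (p.1, p.2.2) (q.1, q.2.2) * (if p.2.1 = q.2.1 then 1 else 0)

/-- `M₂₃ = 1 ⊗ M`. -/
def lift23 {n : ℕ} (M : MatT n) : MatT3 n :=
  fun p q => M (p.2.1, p.2.2) (q.2.1, q.2.2) * (if p.1 = q.1 then 1 else 0)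

/-- The quantum Yang–Baxter equation `R₁₂R₁₃R₂₃ = R₂₃R₁₃R₁₂`. -/
def QYBE {n : ℕ} (M : MatT n) : Prop :=
  lift12 M * lift13 M * lift23 M = lift23 M * lift13 M * lift12 M

/-- The Hecke relation `(PR − q)(PR + q⁻¹) = 0`. -/
def Hecke {n : ℕ} (q : ℝ) (M : MatT n) : Prop :=
  (Pm n * M - (q : ℂ) • (1 : MatT n)) * (Pm n * M + (q : ℂ)⁻¹ • (1 : MatT n)) = 0

/-- Standard basis vector `e_i` of `ℂⁿ` (as a function on indices). -/
def evec (i : ℕ) : ℕ → ℂ := fun k => if k = i then 1 else 0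
/-- The root vector `e_i − e_j`. -/
def rvec (i j : ℕ) : ℕ → ℂ := evec i - evec j
/-- The simple root `α_i = e_i − e_{i+1}` (0-based indexing). -/
def svec (i : ℕ) : ℕ → ℂ := rvec i (i + 1)
/-- The inner product on `ℂⁿ` for which `(e_i)` is orthonormal (restricted to real vectors). -/
def ipn (n : ℕ) (x y : ℕ → ℂ) : ℂ := ∑ k ∈ range n, x k * y k

/-- A Belavin–Drinfeld triple of type `A_{n−1}`; simple roots are indexed `0,…,n−2`
(0-based: index `i` stands for `α_i = e_i − e_{i+1}`). -/
structure BDTriple (n : ℕ) where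
  Γ1 : Finset ℕ
  Γ2 : Finset ℕ
  τ : ℕ → ℕ
  mem1 : ∀ i ∈ Γ1, i + 1 < n
  mem2 : ∀ i ∈ Γ2, i + 1 < n
  bij : Set.BijOn τ ↑Γ1 ↑Γ2
  isometry : ∀ i ∈ Γ1, ∀ j ∈ Γ1, ipn n (svec (τ i)) (svec (τ j)) = ipn n (svec i) (svec j)
  nilp : ∀ i ∈ Γ1, ∃ k ≥ 1, τ^[k] i ∉ Γ1

variable {n : ℕ}

/-- The positive root `e_i − e_j` (`i < j`) lies in `Γ̃₁` (the positive part of `Span Γ₁`). -/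
def SpanRoot (T : BDTriple n) (i j : ℕ) : Prop :=
  i < j ∧ ∀ k, i ≤ k → k < j → k ∈ T.Γ1

/-- `q = τ(p)` for positive roots, via the additive extension of `τ` to `Γ̃₁`. -/
def tauStep (T : BDTriple n) (p q : ℕ × ℕ) : Prop :=
  SpanRoot T p.1 p.2 ∧ q.1 < q.2 ∧ rvec q.1 q.2 = ∑ k ∈ Finset.Ico p.1 p.2, svec (T.τ k)

/-- `q = τᵏ(p)`. -/
def precK (T : BDTriple n) : ℕ → ℕ × ℕ → ℕ × ℕ → Prop
  | 0, p, q => p = q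
  | k + 1, p, q => ∃ r, tauStep T p r ∧ precK T k r q

/-- `p ≺ q`, i.e. `q = τᵏ p` for some `k ≥ 1`. -/
def prec (T : BDTriple n) (p q : ℕ × ℕ) : Prop := ∃ k, precK T (k + 1) p q

/-- `p ≺← q` : `q = τᵏ p` and `τᵏ` reverses orientation on `p`. -/
def RevOri (T : BDTriple n) (p q : ℕ × ℕ) : Prop :=
  ∃ k, precK T (k + 1) p q ∧ T.τ^[k + 1] p.1 = q.2 - 1

/-- `p ≺→ q` : `q = τᵏ p` and `τᵏ` preserves orientation on `p`. -/
def PresOri (T : BDTriple n) (p q : ℕ × ℕ) : Prop :=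
  ∃ k, precK T (k + 1) p q ∧ T.τ^[k + 1] p.1 = q.1

/-- `sign(α,β)` : `(−1)^{1−|α|}` in the orientation-reversing case, `1` otherwise. -/
def sgn (T : BDTriple n) (p q : ℕ × ℕ) : ℂ :=
  if RevOri T p q then (-1 : ℂ) ^ (p.2 - p.1 - 1) else 1

/-- Sum over all pairs of (would-be) positive roots with indices `< n`. -/
def sumRoots (n : ℕ) (f : ℕ × ℕ → ℕ × ℕ → MatT n) : MatT n :=
  ∑ i ∈ range n, ∑ j ∈ range n, ∑ k ∈ range n, ∑ l ∈ range n, f (i, j) (k, l)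

/-- `a = Σ_{α≺β} sign(α,β) (e_{−α} ⊗ e_β − e_β ⊗ e_{−α})`. -/
def aMat (T : BDTriple n) : MatT n :=
  sumRoots n fun p q =>
    if prec T p q then
      sgn T p q • (tens (E n p.2 p.1) (E n q.1 q.2) - tens (E n q.1 q.2) (E n p.2 p.1))
    else 0

/-- `r_s = ½ P⁰ + Σ_{α>0} e_{−α} ⊗ e_α`. -/
def rsMat (n : ℕ) : MatT n :=
  (1 / 2 : ℂ) • P0 n +
    ∑ i ∈ range n, ∑ j ∈ range n, if i < j then tens (E n j i) (E n i j) else 0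

/-- `ε = a r_s + r_s a + a²`. -/
def epsMat (T : BDTriple n) : MatT n :=
  aMat T * rsMat n + rsMat n * aMat T + aMat T * aMat T

/-- Entry of a tensor-square matrix, with ℕ indices. -/
def entry (M : MatT n) (a b c d : ℕ) : ℂ :=
  if h : a < n ∧ b < n ∧ c < n ∧ d < n then
    M (⟨a, h.1⟩, ⟨b, h.2.1⟩) (⟨c, h.2.2.1⟩, ⟨d, h.2.2.2⟩)
  else 0

/-- The coefficient of `e_β ⊗ e_{−α}` in `M` (here `p = α`, `q = β`). -/
def coeffBA (M : MatT n) (p q : ℕ × ℕ) : ℂ := entry M q.1 p.2 q.2 p.1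

/-- `q^z = exp(z · ln q)`. -/
def qpow (q : ℝ) (z : ℂ) : ℂ := Complex.exp (z * (Real.log q : ℂ))

/-- The coefficients `K_{α,β}`. -/
def Kc (T : BDTriple n) (p q : ℕ × ℕ) : ℂ :=
  (if p.2 = q.1 then (1 / 2 : ℂ) else 0) - (if q.2 = p.1 then (1 / 2 : ℂ) else 0)
    + (if ∃ g : ℕ × ℕ, prec T p g ∧ prec T g q ∧ p.2 = g.1 then 1 else 0)
    - (if ∃ g : ℕ × ℕ, prec T p g ∧ prec T g q ∧ g.2 = p.1 then 1 else 0)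
    + (if RevOri T p q then 1 - ((p.2 - p.1 : ℕ) : ℂ) else 0)

/-- `Jⁱ = 1 + (q − q⁻¹) Σ_{β = τⁱα} sign(α,β) q^{K_{α,β}} e_β ⊗ e_{−α}`. -/
def Jlevel (q : ℝ) (T : BDTriple n) (i : ℕ) : MatT n :=
  1 + sumRoots n fun p r =>
    if precK T i p r then
      (((q : ℂ) - (q : ℂ)⁻¹) * sgn T p r * qpow q (Kc T p r)) • tens (E n r.1 r.2) (E n p.2 p.1)
    else 0

/-- `J = J¹ J² ⋯` (levels beyond the maximal power of `τ` contribute the identity). -/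
def Jmat (q : ℝ) (T : BDTriple n) : MatT n :=
  ((List.range n).map fun i => Jlevel q T (i + 1)).prod

/-- The standard Drinfeld–Jimbo `R`-matrix `R_s`. -/
def RsQ (n : ℕ) (q : ℝ) : MatT n :=
  (q : ℂ) • P0 n
    + (∑ i ∈ range n, ∑ j ∈ range n, if i ≠ j then tens (E n i i) (E n j j) else 0)
    + ((q : ℂ) - (q : ℂ)⁻¹) •
        (∑ i ∈ range n, ∑ j ∈ range n, if j < i then tens (E n i j) (E n j i) else 0)

/-- `e_{−α} ∧_c e_β = q^{−c} e_{−α} ⊗ e_β − q^c e_β ⊗ e_{−α}` (`p = α`, `r = β`). -/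
def wedgeC {n : ℕ} (q : ℝ) (c : ℂ) (p r : ℕ × ℕ) : MatT n :=
  qpow q (-c) • tens (E n p.2 p.1) (E n r.1 r.2) - qpow q c • tens (E n r.1 r.2) (E n p.2 p.1)

/-- `R̄_GGS = R_s + (q−q⁻¹) Σ_{α≺β} sign(α,β) e_{−α} ∧_{−sign(α,β) ε_{α,β}} e_β`. -/
def RbarGGS (q : ℝ) (T : BDTriple n) : MatT n :=
  RsQ n q + ((q : ℂ) - (q : ℂ)⁻¹) •
    sumRoots n fun p r =>
      if prec T p r then
        sgn T p r • wedgeC q (-(sgn T p r) * coeffBA (epsMat T) p r) p r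
      else 0

/-- `R̄_J = J⁻¹ R_s J₂₁`. -/
def RbarJ (q : ℝ) (T : BDTriple n) : MatT n :=
  (Jmat q T)⁻¹ * RsQ n q * swap21 (Jmat q T)

/-- `q^{r⁰}` for a diagonal⊗diagonal `r⁰`. -/
def qr0 (n : ℕ) (q : ℝ) (r0 : ℕ → ℕ → ℂ) : MatT n :=
  ∑ i ∈ range n, ∑ j ∈ range n, qpow q (r0 i j) • tens (E n i i) (E n j j)

/-- `R_GGS = q^{r⁰} R̄_GGS q^{r⁰}`. -/
def RGGS (q : ℝ) (T : BDTriple n) (r0 : ℕ → ℕ → ℂ) : MatT n :=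
  qr0 n q r0 * RbarGGS q T * qr0 n q r0

/-- `R_J = q^{r⁰} R̄_J q^{r⁰}`. -/
def RJ (q : ℝ) (T : BDTriple n) (r0 : ℕ → ℕ → ℂ) : MatT n :=
  qr0 n q r0 * RbarJ q T * qr0 n q r0

/-- `r⁰ ∈ 𝔥 ∧ 𝔥`, i.e. the coefficient matrix is antisymmetric. -/
def Antisym (n : ℕ) (r0 : ℕ → ℕ → ℂ) : Prop := ∀ i < n, ∀ j < n, r0 i j = -r0 j i

/-- The Belavin–Drinfeld compatibility equations
`((α − τα) ⊗ 1) r⁰ = ½ ((α + τα) ⊗ 1) P⁰` for all `α ∈ Γ₁`, written componentwise. -/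
def Compat (T : BDTriple n) (r0 : ℕ → ℕ → ℂ) : Prop :=
  ∀ s ∈ T.Γ1, ∀ j < n,
    r0 s j - r0 (s + 1) j - r0 (T.τ s) j + r0 (T.τ s + 1) j
      = (1 / 2 : ℂ) *
        ((if j = s then 1 else 0) - (if j = s + 1 then 1 else 0)
          + (if j = T.τ s then 1 else 0) - (if j = T.τ s + 1 then 1 else 0))

/-- `a₊ⁱ` : the part of `a₊` supported on pairs with `β = τⁱα`. -/
def aPlusLev (T : BDTriple n) (i : ℕ) : MatT n :=
  sumRoots n fun p r =>
    if precK T i p r then (-(sgn T p r)) • tens (E n r.1 r.2) (E n p.2 p.1) else 0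

/-- `a₊ = Σ_{α≺β} (−sign(α,β)) e_β ⊗ e_{−α}`. -/
def aPlus (T : BDTriple n) : MatT n :=
  sumRoots n fun p r =>
    if prec T p r then (-(sgn T p r)) • tens (E n r.1 r.2) (E n p.2 p.1) else 0

/-- `a₋ = Σ_{α≺β} sign(α,β) e_{−α} ⊗ e_β`. -/
def aMinus (T : BDTriple n) : MatT n :=
  sumRoots n fun p r =>
    if prec T p r then sgn T p r • tens (E n p.2 p.1) (E n r.1 r.2) else 0

/-- `P₊ = Σ_{i<j} E_{ij}⊗E_{ji} + ½P⁰`. -/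
def PPlus (n : ℕ) : MatT n :=
  (∑ i ∈ range n, ∑ j ∈ range n, if i < j then tens (E n i j) (E n j i) else 0)
    + (1 / 2 : ℂ) • P0 n

/-- `P₋ = Σ_{i>j} E_{ij}⊗E_{ji} + ½P⁰`. -/
def PMinus (n : ℕ) : MatT n :=
  (∑ i ∈ range n, ∑ j ∈ range n, if j < i then tens (E n i j) (E n j i) else 0)
    + (1 / 2 : ℂ) • P0 n

/-- The matrix `Σ_{i≥j} a₊ⁱa₊ʲ − Σ_{i<j} a₊ⁱa₊ʲ + a₊P₋ + a₋P₊ + P₊a₊ + a₊a₋ − a₋a₊`. -/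
def Mmat (T : BDTriple n) : MatT n :=
  (∑ i ∈ range n, ∑ j ∈ range n, if j ≤ i then aPlusLev T (i + 1) * aPlusLev T (j + 1) else 0)
    - (∑ i ∈ range n, ∑ j ∈ range n, if i < j then aPlusLev T (i + 1) * aPlusLev T (j + 1) else 0)
    + aPlus T * PMinus n + aMinus T * PPlus n + PPlus n * aPlus T
    + aPlus T * aMinus T - aMinus T * aPlus T

/-- `L_{α,β}` : `½` if `α ⋖ β`, `−½` if `α ⋗ β`, `0` otherwise. -/
def Lc (p r : ℕ × ℕ) : ℂ :=
  if p.2 = r.1 then 1 / 2 else if r.2 = p.1 then -(1 / 2) else 0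

/-- The part of `M` (viewed on the basis `e_{τα} ⊗ e_{−α}`, `α ∈ Γ̃₁`) supported on
pairs with `α ⋗ τα`. -/
def partGtr (T : BDTriple n) (M : MatT n) : MatT n :=
  sumRoots n fun p r =>
    if tauStep T p r ∧ r.2 = p.1 then coeffBA M p r • tens (E n r.1 r.2) (E n p.2 p.1) else 0

/-- The part of `M` (viewed on the basis `e_{−α} ⊗ e_{τα}`, `α ∈ Γ̃₁`) supported on
pairs with `α ⋖ τα`. -/
def partLess21 (T : BDTriple n) (M : MatT n) : MatT n :=
  sumRoots n fun p r =>
    if tauStep T p r ∧ p.2 = r.1 then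
      entry M p.2 r.1 p.1 r.2 • tens (E n p.2 p.1) (E n r.1 r.2)
    else 0

/-!
Every pair `α ≺ β` of the union lies in exactly one component, and `sign(α,β)` and `K_{α,β}`
are the same there. The matrices `a⁽ⁱ⁾` and `J⁽ⁱ⁾ − 1` are supported on index patterns of the
`i`-th component only (those of `e_{-α} ⊗ e_β` and `e_β ⊗ e_{-α}`, the latter being stable under
products), and orthogonality of the components makes products of such matrices from different
components vanish, also when `R_s` sits in between. Hence `a = Σ a⁽ⁱ⁾`, `ε = Σ ε⁽ⁱ⁾` with `ε⁽ʲ⁾`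
contributing nothing to the coefficients on pairs of another component, which gives the
identity for `R̄_GGS`; and `J = 1 + Σ (J⁽ⁱ⁾ − 1)`, `J⁻¹ = 1 + Σ ((J⁽ⁱ⁾)⁻¹ − 1)`, so that all
cross terms in `J⁻¹ R_s J₂₁` drop out.
-/

section MatrixSupport

variable {m α : Type*}

def SupportedOn [Zero α] (P : m → m → Prop) (M : Matrix m m α) : Prop :=
  ∀ x y, M x y ≠ 0 → P x y

namespace SupportedOn

variable {P Q R : m → m → Prop} {M N : Matrix m m α}

lemma zero [Zero α] : SupportedOn P (0 : Matrix m m α) := fun _ _ h => absurd rfl h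

lemma mono [Zero α] (hM : SupportedOn P M) (hPQ : ∀ x y, P x y → Q x y) : SupportedOn Q M :=
  fun x y h => hPQ x y (hM x y h)

lemma eq_zero [Zero α] (hM : SupportedOn P M) (hP : ∀ x y, ¬P x y) : M = 0 := by
  ext x y
  by_contra h
  exact hP x y (hM x y h)

lemma ite [Zero α] {c : Prop} [Decidable c] (hM : c → SupportedOn P M) :
    SupportedOn P (if c then M else 0) := by
  split_ifs with hc
  exacts [hM hc, zero]

lemma add [AddZeroClass α] (hM : SupportedOn P M) (hN : SupportedOn P N) :
    SupportedOn P (M + N) := by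
  intro x y h
  by_contra hP
  apply h
  rw [Matrix.add_apply, not_not.1 ((hM x y).mt hP), not_not.1 ((hN x y).mt hP), add_zero]

lemma sub [AddGroup α] (hM : SupportedOn P M) (hN : SupportedOn P N) :
    SupportedOn P (M - N) := by
  intro x y h
  by_contra hP
  apply h
  rw [Matrix.sub_apply, not_not.1 ((hM x y).mt hP), not_not.1 ((hN x y).mt hP), sub_zero]

lemma smul {S : Type*} [Zero α] [SMulZeroClass S α] (c : S) (hM : SupportedOn P M) :
    SupportedOn P (c • M) := by
  intro x y h
  refine hM x y fun h0 => h ?_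
  rw [Matrix.smul_apply, h0, smul_zero]

lemma sum [AddCommMonoid α] {ι : Type*} {s : Finset ι} {f : ι → Matrix m m α}
    (hf : ∀ i ∈ s, SupportedOn P (f i)) : SupportedOn P (∑ i ∈ s, f i) :=
  Finset.sum_induction f (SupportedOn P) (fun _ _ => add) zero hf

lemma mul [Fintype m] [NonUnitalNonAssocSemiring α] (hM : SupportedOn P M) (hN : SupportedOn Q N)
    (hPQ : ∀ x y z, P x y → Q y z → R x z) : SupportedOn R (M * N) := by
  intro x z h
  obtain ⟨y, -, hy⟩ := Finset.exists_ne_zero_of_sum_ne_zero h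
  exact hPQ x y z (hM x y (left_ne_zero_of_mul hy)) (hN y z (right_ne_zero_of_mul hy))

lemma mul_apply_eq_zero [Fintype m] [NonUnitalNonAssocSemiring α] (hM : SupportedOn P M)
    (hN : SupportedOn Q N) {x z : m} (hPQ : ∀ y, P x y → Q y z → False) : (M * N) x z = 0 :=
  Finset.sum_eq_zero fun y _ => by_contra fun h =>
    hPQ y (hM x y (left_ne_zero_of_mul h)) (hN y z (right_ne_zero_of_mul h))

lemma mul_eq_zero [Fintype m] [NonUnitalNonAssocSemiring α] (hM : SupportedOn P M)
    (hN : SupportedOn Q N) (hPQ : ∀ x y z, P x y → Q y z → False) : M * N = 0 := by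
  ext x z
  exact hM.mul_apply_eq_zero hN (hPQ x · z)

lemma pow_eq_zero [Fintype m] [DecidableEq m] [Semiring α] (hM : SupportedOn P M)
    {f : m → ℕ} {k : ℕ} (hf : ∀ x, f x < k) (hP : ∀ x y, P x y → f x < f y) : M ^ k = 0 := by
  have hpow : ∀ j, SupportedOn (fun x y => f x + j ≤ f y) (M ^ j) := by
    intro j
    induction j with
    | zero =>
      intro x y h
      obtain rfl : x = y := by_contra fun hxy => h (Matrix.one_apply_ne hxy)
      simp
    | succ j ih =>
      rw [pow_succ]
      exact ih.mul hM fun x y z hxy hyz => by have := hP y z hyz; omega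
  exact (hpow k).eq_zero fun x y h => by have := hf y; omega

end SupportedOn

def supportedSubsemiring [Fintype m] [NonUnitalNonAssocSemiring α] (P : m → m → Prop)
    (hP : ∀ x y z, P x y → P y z → P x z) : NonUnitalSubsemiring (Matrix m m α) where
  carrier := {M | SupportedOn P M}
  add_mem' := SupportedOn.add
  zero_mem' := SupportedOn.zero
  mul_mem' hM hN := hM.mul hN hP

end MatrixSupport

section OrthogonalFamily

variable {R ι β : Type*} [Ring R] [Fintype ι]

lemma sum_mul_sum_of_mul_eq_zero {f g : ι → R} (h : ∀ i j, i ≠ j → f i * g j = 0) :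
    (∑ i, f i) * ∑ i, g i = ∑ i, f i * g i := by
  rw [Fintype.sum_mul_sum]
  exact Finset.sum_congr rfl fun i _ => Fintype.sum_eq_single i fun j hj => h i j (Ne.symm hj)

lemma list_prod_map_one_add_sub_one_mem (S : NonUnitalSubsemiring R) {L : List β} {f : β → R}
    (hf : ∀ b ∈ L, f b ∈ S) : (L.map fun b => 1 + f b).prod - 1 ∈ S := by
  induction L with
  | nil => simp
  | cons b L ih =>
    have hb : f b ∈ S := hf b List.mem_cons_self
    have hL := ih fun b' hb' => hf b' (List.mem_cons_of_mem b hb')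
    set P := (L.map fun b => 1 + f b).prod
    have expand : (1 + f b) * P - 1 = f b + (P - 1) + f b * (P - 1) := by noncomm_ring
    rw [List.map_cons, List.prod_cons, expand]
    exact S.add_mem (S.add_mem hb hL) (S.mul_mem hb hL)

lemma list_prod_map_one_add_sum {S : ι → NonUnitalSubsemiring R}
    (hS : ∀ i j, i ≠ j → ∀ a ∈ S i, ∀ b ∈ S j, a * b = 0) {L : List β} {f : ι → β → R}
    (hf : ∀ i, ∀ b ∈ L, f i b ∈ S i) :
    (L.map fun b => 1 + ∑ i, f i b).prod = 1 + ∑ i, ((L.map fun b => 1 + f i b).prod - 1) := by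
  induction L with
  | nil => simp
  | cons b L ih =>
    have hL : ∀ i, ∀ b' ∈ L, f i b' ∈ S i := fun i b' hb' => hf i b' (List.mem_cons_of_mem b hb')
    set P := fun i => (L.map fun b => 1 + f i b).prod - 1
    have hcross : (∑ i, f i b) * ∑ i, P i = ∑ i, f i b * P i :=
      sum_mul_sum_of_mul_eq_zero fun i j hij => hS i j hij _ (hf i b List.mem_cons_self) _
        (list_prod_map_one_add_sub_one_mem (S j) (hL j))
    simp only [List.map_cons, List.prod_cons, ih hL]
    calc (1 + ∑ i, f i b) * (1 + ∑ i, P i)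
        = 1 + (∑ i, f i b + ∑ i, P i + (∑ i, f i b) * ∑ i, P i) := by noncomm_ring
      _ = 1 + ∑ i, ((1 + f i b) * (P i + 1) - 1) := by
        rw [hcross, ← Finset.sum_add_distrib, ← Finset.sum_add_distrib]
        congr 1
        exact Finset.sum_congr rfl fun i _ => by noncomm_ring
      _ = _ := by simp only [P, sub_add_cancel]

lemma one_add_sum_mul_one_add_sum_eq_one {x y : ι → R} (hxy : ∀ i, (1 + x i) * (1 + y i) = 1)
    (hxx : ∀ i j, i ≠ j → x i * x j = 0) : (1 + ∑ i, x i) * (1 + ∑ i, y i) = 1 := by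
  have hy i : y i = -(x i * (1 + y i)) := by
    calc y i = (1 + x i) * (1 + y i) - 1 - x i * (1 + y i) := by noncomm_ring
      _ = _ := by rw [hxy i]; noncomm_ring
  have hxy_orth i j (hij : i ≠ j) : x i * y j = 0 := by
    rw [hy j, mul_neg, ← mul_assoc, hxx i j hij, zero_mul, neg_zero]
  calc (1 + ∑ i, x i) * (1 + ∑ i, y i)
      = 1 + (∑ i, x i + ∑ i, y i + (∑ i, x i) * ∑ i, y i) := by noncomm_ring
    _ = 1 + ∑ i, ((1 + x i) * (1 + y i) - 1) := by
      rw [sum_mul_sum_of_mul_eq_zero hxy_orth, ← Finset.sum_add_distrib, ← Finset.sum_add_distrib]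
      congr 1
      exact Finset.sum_congr rfl fun i _ => by noncomm_ring
    _ = 1 := by simp [hxy]

lemma one_add_sum_mul_mul_one_add_sum_sub {x y z : ι → R} (c : R)
    (hyx : ∀ i, (1 + y i) * (1 + x i) = 1) (hxcz : ∀ i j, i ≠ j → x i * c * z j = 0) :
    (1 + ∑ i, y i) * c * (1 + ∑ i, z i) - c = ∑ i, ((1 + y i) * c * (1 + z i) - c) := by
  have hy i : y i = -((1 + y i) * x i) := by
    calc y i = (1 + y i) * (1 + x i) - 1 - (1 + y i) * x i := by noncomm_ring
      _ = _ := by rw [hyx i]; noncomm_ring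
  have hycz i j (hij : i ≠ j) : y i * c * z j = 0 := by
    rw [hy i, neg_mul, neg_mul, mul_assoc, mul_assoc, ← mul_assoc (x i), hxcz i j hij, mul_zero,
      neg_zero]
  calc (1 + ∑ i, y i) * c * (1 + ∑ i, z i) - c
      = (∑ i, y i) * c + c * ∑ i, z i + (∑ i, y i * c) * ∑ i, z i := by
        rw [← Finset.sum_mul]; noncomm_ring
    _ = _ := by
      rw [sum_mul_sum_of_mul_eq_zero hycz, Finset.sum_mul, Finset.mul_sum,
        ← Finset.sum_add_distrib, ← Finset.sum_add_distrib]
      exact Finset.sum_congr rfl fun i _ => by noncomm_ring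

end OrthogonalFamily

lemma ite_eq_sum_ite {M ι : Type*} [AddCommMonoid M] [Fintype ι] {P : Prop} [Decidable P]
    {Q : ι → Prop} [DecidablePred Q] {a : M} {b : ι → M} (hPQ : P ↔ ∃ i, Q i)
    (huniq : ∀ i j, Q i → Q j → i = j) (hab : ∀ i, Q i → a = b i) :
    (if P then a else 0) = ∑ i, if Q i then b i else 0 := by
  by_cases hP : P
  · obtain ⟨i, hi⟩ := hPQ.1 hP
    rw [if_pos hP, Fintype.sum_eq_single i fun j hj => if_neg fun hQj => hj (huniq j i hQj hi),
      if_pos hi, hab i hi]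
  · rw [if_neg hP]
    exact (Finset.sum_eq_zero fun i _ => if_neg fun hi => hP (hPQ.2 ⟨i, hi⟩)).symm

lemma ipn_svec_self {s : ℕ} (hs : s + 1 < n) : ipn n (svec s) (svec s) = 2 := by
  have : s < n := by omega
  norm_num [ipn, svec, rvec, evec, mul_sub, Finset.sum_sub_distrib, hs, this]

lemma ipn_svec_succ {s : ℕ} (hs : s + 2 < n) : ipn n (svec s) (svec (s + 1)) = -1 := by
  have : s + 1 < n := by omega
  simp [ipn, svec, rvec, evec, mul_sub, Finset.sum_sub_distrib, hs, this]
  omega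

lemma ne_and_succ_ne_of_ipn_svec_eq_zero {s t : ℕ} (hs : s + 1 < n) (ht : t + 1 < n)
    (h : ipn n (svec s) (svec t) = 0) : s ≠ t ∧ s + 1 ≠ t := by
  constructor <;> rintro rfl
  · rw [ipn_svec_self hs] at h; norm_num at h
  · rw [ipn_svec_succ ht] at h; norm_num at h

lemma sum_svec_Ico {a b : ℕ} (hab : a ≤ b) : ∑ m ∈ Finset.Ico a b, svec m = rvec a b := by
  induction b, hab using Nat.le_induction with
  | base => simp [rvec]
  | succ b hab ih =>
    rw [Finset.sum_Ico_succ_top hab, ih]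
    simp only [rvec, svec]
    abel

lemma sum_svec_apply (B : Finset ℕ) (k : ℕ) :
    (∑ m ∈ B, svec m) k = (if k ∈ B then 1 else 0) - (if ∃ m ∈ B, k = m + 1 then 1 else 0) := by
  rw [Finset.sum_apply]
  simp only [svec, rvec, evec, Pi.sub_apply, Finset.sum_sub_distrib]
  cases k with
  | zero => simp
  | succ k => simp [eq_comm]

lemma sum_svec_injective : Function.Injective fun B : Finset ℕ => ∑ m ∈ B, svec m := by
  intro B C h
  ext k
  induction k using Nat.strong_induction_on with
  | _ k ih =>
    have hk := congrFun h k
    simp only [sum_svec_apply] at hk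
    have hpred : (∃ m ∈ B, k = m + 1) ↔ ∃ m ∈ C, k = m + 1 := by
      constructor <;> rintro ⟨m, hm, rfl⟩ <;> exact ⟨m, by simpa [ih m (by omega)] using hm, rfl⟩
    rw [if_congr hpred rfl rfl, sub_left_inj] at hk
    by_cases hB : k ∈ B <;> by_cases hC : k ∈ C <;> simp_all

/-- The simple roots `α_a, …, α_{b-1}` all lie in `G`. -/
def SegIn (G : Finset ℕ) (a b : ℕ) : Prop := a < b ∧ ∀ k, a ≤ k → k < b → k ∈ G

lemma SegIn.left_mem {G : Finset ℕ} {a b : ℕ} (h : SegIn G a b) : a ∈ G :=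
  h.2 a le_rfl h.1

lemma SegIn.pred_right_mem {G : Finset ℕ} {a b : ℕ} (h : SegIn G a b) : b - 1 ∈ G :=
  h.2 (b - 1) (by have := h.1; omega) (by have := h.1; omega)

lemma SegIn.trans {G : Finset ℕ} {a b c : ℕ} (hab : SegIn G a b) (hbc : SegIn G b c) :
    SegIn G a c :=
  ⟨hab.1.trans hbc.1, fun k hak hkc =>
    if hkb : k < b then hab.2 k hak hkb else hbc.2 k (not_lt.1 hkb) hkc⟩

section RootSegments

variable {T : BDTriple n}

lemma tauStep.image_eq {p r : ℕ × ℕ} (h : tauStep T p r) :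
    (Finset.Ico p.1 p.2).image T.τ = Finset.Ico r.1 r.2 := by
  have hΓ1 : ∀ k ∈ Finset.Ico p.1 p.2, k ∈ T.Γ1 := fun k hk =>
    h.1.2 k (Finset.mem_Ico.1 hk).1 (Finset.mem_Ico.1 hk).2
  apply sum_svec_injective
  dsimp only
  rw [Finset.sum_image fun x hx y hy hxy => T.bij.injOn (hΓ1 x hx) (hΓ1 y hy) hxy, ← h.2.2,
    sum_svec_Ico h.2.1.le]

lemma tauStep.segIn_Γ2 {p r : ℕ × ℕ} (h : tauStep T p r) : SegIn T.Γ2 r.1 r.2 := by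
  refine ⟨h.2.1, fun k hk1 hk2 => ?_⟩
  obtain ⟨l, hl, rfl⟩ := Finset.mem_image.1 (h.image_eq ▸ Finset.mem_Ico.2 ⟨hk1, hk2⟩)
  exact T.bij.mapsTo (h.1.2 l (Finset.mem_Ico.1 hl).1 (Finset.mem_Ico.1 hl).2)

lemma precK.spanRoot {k : ℕ} {p r : ℕ × ℕ} (h : precK T (k + 1) p r) : SpanRoot T p.1 p.2 := by
  obtain ⟨_, hstep, _⟩ := h
  exact hstep.1

lemma precK.segIn_Γ2 : ∀ {k : ℕ} {p r : ℕ × ℕ}, precK T (k + 1) p r → SegIn T.Γ2 r.1 r.2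
  | 0, _, _, ⟨_, hstep, rfl⟩ => hstep.segIn_Γ2
  | _ + 1, _, _, ⟨_, _, hrest⟩ => precK.segIn_Γ2 hrest

lemma prec.spanRoot {p r : ℕ × ℕ} (h : prec T p r) : SpanRoot T p.1 p.2 :=
  h.elim fun _ hk => hk.spanRoot

lemma prec.segIn_Γ2 {p r : ℕ × ℕ} (h : prec T p r) : SegIn T.Γ2 r.1 r.2 :=
  h.elim fun _ hk => hk.segIn_Γ2

end RootSegments

lemma sumRoots_sum {ι : Type*} (s : Finset ι) (f : ι → ℕ × ℕ → ℕ × ℕ → MatT n) :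
    sumRoots n (fun p r => ∑ i ∈ s, f i p r) = ∑ i ∈ s, sumRoots n (f i) := by
  symm
  simp only [sumRoots]
  rw [Finset.sum_comm]; refine Finset.sum_congr rfl fun _ _ => ?_
  rw [Finset.sum_comm]; refine Finset.sum_congr rfl fun _ _ => ?_
  rw [Finset.sum_comm]; refine Finset.sum_congr rfl fun _ _ => ?_
  exact Finset.sum_comm

lemma sumRoots_ite_eq_sum {ι : Type*} [Fintype ι] {P : ℕ × ℕ → ℕ × ℕ → Prop}
    {Q : ι → ℕ × ℕ → ℕ × ℕ → Prop} {f : ℕ × ℕ → ℕ × ℕ → MatT n}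
    {g : ι → ℕ × ℕ → ℕ × ℕ → MatT n} (hPQ : ∀ p r, P p r ↔ ∃ i, Q i p r)
    (huniq : ∀ i j p r, Q i p r → Q j p r → i = j) (hfg : ∀ i p r, Q i p r → f p r = g i p r) :
    sumRoots n (fun p r => if P p r then f p r else 0)
      = ∑ i, sumRoots n (fun p r => if Q i p r then g i p r else 0) := by
  rw [← sumRoots_sum]
  congr
  funext p r
  exact ite_eq_sum_ite (hPQ p r) (fun i j => huniq i j p r) fun i => hfg i p r

lemma coeffBA_sum {ι : Type*} (s : Finset ι) (f : ι → MatT n) (p r : ℕ × ℕ) :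
    coeffBA (∑ i ∈ s, f i) p r = ∑ i ∈ s, coeffBA (f i) p r := by
  simp only [coeffBA, entry]
  split_ifs <;> simp [Matrix.sum_apply]

lemma swap21_eq_reindexAlgEquiv (M : MatT n) :
    swap21 M = Matrix.reindexAlgEquiv ℂ ℂ (Equiv.prodComm (Fin n) (Fin n)) M :=
  rfl

lemma supportedOn_tens_E (a b c d : ℕ) :
    SupportedOn (fun x y : Fin n × Fin n =>
      (x.1 : ℕ) = a ∧ (y.1 : ℕ) = b ∧ (x.2 : ℕ) = c ∧ (y.2 : ℕ) = d)
      (tens (E n a b) (E n c d)) := by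
  intro x y h
  simp only [tens, E, ne_eq, mul_eq_zero, ite_eq_right_iff, one_ne_zero, imp_false, not_or,
    not_not] at h
  exact ⟨h.1.1, h.1.2, h.2.1, h.2.2⟩

lemma supportedOn_sumRoots {P : Fin n × Fin n → Fin n × Fin n → Prop}
    {f : ℕ × ℕ → ℕ × ℕ → MatT n} (hf : ∀ p r, SupportedOn P (f p r)) :
    SupportedOn P (sumRoots n f) :=
  SupportedOn.sum fun _ _ => SupportedOn.sum fun _ _ => SupportedOn.sum fun _ _ =>
    SupportedOn.sum fun _ _ => hf _ _

lemma supportedOn_swap21 {P : Fin n × Fin n → Fin n × Fin n → Prop} {M : MatT n}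
    (hM : SupportedOn P M) : SupportedOn (fun x y => P x.swap y.swap) (swap21 M) :=
  fun x y h => hM x.swap y.swap h

lemma eq_swap_of_val {x y : Fin n × Fin n} (h1 : (y.1 : ℕ) = x.2) (h2 : (y.2 : ℕ) = x.1) :
    y = x.swap :=
  Prod.ext (Fin.ext h1) (Fin.ext h2)

lemma rsMat_supportedOn (n : ℕ) :
    SupportedOn (fun x y : Fin n × Fin n => y = x.swap) (rsMat n) := by
  refine .add (.smul _ (.sum fun _ _ => ?_)) (.sum fun _ _ => .sum fun _ _ => .ite fun _ => ?_) <;>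
    exact (supportedOn_tens_E _ _ _ _).mono fun _ _ _ => eq_swap_of_val (by omega) (by omega)

lemma RsQ_supportedOn (n : ℕ) (q : ℝ) :
    SupportedOn (fun x y : Fin n × Fin n => y = x ∨ y = x.swap) (RsQ n q) := by
  refine .add (.add (.smul _ (.sum fun _ _ => ?_))
    (.sum fun _ _ => .sum fun _ _ => .ite fun _ => ?_))
    (.smul _ (.sum fun _ _ => .sum fun _ _ => .ite fun _ => ?_))
  all_goals refine (supportedOn_tens_E _ _ _ _).mono fun x y h => ?_
  · exact Or.inl (Prod.ext (Fin.ext (by omega)) (Fin.ext (by omega)))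
  · exact Or.inl (Prod.ext (Fin.ext (by omega)) (Fin.ext (by omega)))
  · exact Or.inr (eq_swap_of_val (by omega) (by omega))

/-- The index pattern of `e_β ⊗ e_{-α}` with `β = [x.1, y.1) ⊆ Γ₂` and `α = [y.2, x.2) ⊆ Γ₁`;
it is stable under matrix products. -/
def BASupport (T : BDTriple n) (x y : Fin n × Fin n) : Prop :=
  SegIn T.Γ2 x.1 y.1 ∧ SegIn T.Γ1 y.2 x.2

lemma BASupport.trans {T : BDTriple n} {x y z : Fin n × Fin n} (hxy : BASupport T x y)
    (hyz : BASupport T y z) : BASupport T x z :=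
  ⟨hxy.1.trans hyz.1, hyz.2.trans hxy.2⟩

def baSubsemiring (T : BDTriple n) : NonUnitalSubsemiring (MatT n) :=
  supportedSubsemiring (BASupport T) fun _ _ _ => BASupport.trans

lemma supportedOn_tens_of_prec {T : BDTriple n} {p r : ℕ × ℕ} (h : prec T p r) :
    SupportedOn (BASupport T) (tens (E n r.1 r.2) (E n p.2 p.1)) :=
  (supportedOn_tens_E _ _ _ _).mono fun _ _ ⟨h1, h2, h3, h4⟩ => by
    rw [BASupport, h1, h2, h3, h4]
    exact ⟨h.segIn_Γ2, h.spanRoot⟩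

lemma supportedOn_tens_swap_of_prec {T : BDTriple n} {p r : ℕ × ℕ} (h : prec T p r) :
    SupportedOn (fun x y => BASupport T x.swap y.swap) (tens (E n p.2 p.1) (E n r.1 r.2)) :=
  (supportedOn_tens_E _ _ _ _).mono fun _ _ ⟨h1, h2, h3, h4⟩ => by
    rw [BASupport, Prod.fst_swap, Prod.fst_swap, Prod.snd_swap, Prod.snd_swap, h1, h2, h3, h4]
    exact ⟨h.segIn_Γ2, h.spanRoot⟩

lemma aMat_supportedOn (T : BDTriple n) :
    SupportedOn (fun x y => BASupport T x y ∨ BASupport T x.swap y.swap) (aMat T) :=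
  supportedOn_sumRoots fun _ _ => .ite fun h => .smul _ <| .sub
    ((supportedOn_tens_swap_of_prec h).mono fun _ _ => Or.inr)
    ((supportedOn_tens_of_prec h).mono fun _ _ => Or.inl)

lemma Jlevel_sub_one_mem (q : ℝ) (T : BDTriple n) (l : ℕ) :
    Jlevel q T (l + 1) - 1 ∈ baSubsemiring T := by
  rw [Jlevel, add_sub_cancel_left]
  exact supportedOn_sumRoots fun _ _ => .ite fun h => .smul _ (supportedOn_tens_of_prec ⟨l, h⟩)

lemma Jmat_sub_one_mem (q : ℝ) (T : BDTriple n) : Jmat q T - 1 ∈ baSubsemiring T := by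
  simpa [Jmat] using list_prod_map_one_add_sub_one_mem (baSubsemiring T)
    (L := List.range n) fun l _ => Jlevel_sub_one_mem q T l

lemma isUnit_Jmat (q : ℝ) (T : BDTriple n) : IsUnit (Jmat q T) := by
  have hnil : (Jmat q T - 1) ^ n = 0 :=
    SupportedOn.pow_eq_zero (Jmat_sub_one_mem q T) (f := fun x => x.1) (fun x => x.1.isLt)
      fun _ _ h => h.1.1
  simpa using (IsNilpotent.isUnit_one_add ⟨n, hnil⟩)

structure IsOrthUnion {ι : Type*} [Fintype ι] (Ts : ι → BDTriple n) (T : BDTriple n) : Prop where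
  Γ1_eq : T.Γ1 = Finset.univ.biUnion fun i => (Ts i).Γ1
  τ_eq : ∀ i, ∀ s ∈ (Ts i).Γ1, T.τ s = (Ts i).τ s
  orth1 : ∀ i j, i ≠ j → ∀ s ∈ (Ts i).Γ1, ∀ t ∈ (Ts j).Γ1, ipn n (svec s) (svec t) = 0
  orth2 : ∀ i j, i ≠ j → ∀ s ∈ (Ts i).Γ2, ∀ t ∈ (Ts j).Γ2, ipn n (svec s) (svec t) = 0
  mem_Γ1_of_mem_Γ2 : ∀ i, ∀ s ∈ (Ts i).Γ2, s ∈ T.Γ1 → s ∈ (Ts i).Γ1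

namespace IsOrthUnion

variable {ι : Type*} [Fintype ι] {Ts : ι → BDTriple n} {T : BDTriple n} (H : IsOrthUnion Ts T)
  {i j : ι} {s a b : ℕ} {p r : ℕ × ℕ}
include H

lemma eq_of_mem_Γ1 (hi : s ∈ (Ts i).Γ1) (hj : s ∈ (Ts j).Γ1) : i = j :=
  by_contra fun hij => (ne_and_succ_ne_of_ipn_svec_eq_zero ((Ts i).mem1 s hi)
    ((Ts j).mem1 s hj) (H.orth1 i j hij s hi s hj)).1 rfl

lemma eq_of_succ_mem_Γ1 (hi : s ∈ (Ts i).Γ1) (hj : s + 1 ∈ (Ts j).Γ1) : i = j :=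
  by_contra fun hij => (ne_and_succ_ne_of_ipn_svec_eq_zero ((Ts i).mem1 s hi)
    ((Ts j).mem1 _ hj) (H.orth1 i j hij s hi _ hj)).2 rfl

lemma eq_of_mem_Γ2 (hi : s ∈ (Ts i).Γ2) (hj : s ∈ (Ts j).Γ2) : i = j :=
  by_contra fun hij => (ne_and_succ_ne_of_ipn_svec_eq_zero ((Ts i).mem2 s hi)
    ((Ts j).mem2 s hj) (H.orth2 i j hij s hi s hj)).1 rfl

lemma eq_of_succ_mem_Γ2 (hi : s ∈ (Ts i).Γ2) (hj : s + 1 ∈ (Ts j).Γ2) : i = j :=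
  by_contra fun hij => (ne_and_succ_ne_of_ipn_svec_eq_zero ((Ts i).mem2 s hi)
    ((Ts j).mem2 _ hj) (H.orth2 i j hij s hi _ hj)).2 rfl

lemma mem_Γ1 : s ∈ T.Γ1 ↔ ∃ i, s ∈ (Ts i).Γ1 := by
  simp [H.Γ1_eq]

lemma eq_of_mem_Γ2_of_mem_Γ1 (hi : s ∈ (Ts i).Γ2) (hj : s ∈ (Ts j).Γ1) : i = j :=
  H.eq_of_mem_Γ1 (H.mem_Γ1_of_mem_Γ2 i s hi (H.mem_Γ1.2 ⟨j, hj⟩)) hj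

lemma spanRoot_of_component (h : SpanRoot (Ts i) a b) : SpanRoot T a b :=
  ⟨h.1, fun k hk1 hk2 => H.mem_Γ1.2 ⟨i, h.2 k hk1 hk2⟩⟩

/-- Adjacent simple roots are not orthogonal, so a segment of `Γ₁` lies in one component. -/
lemma exists_spanRoot_component (h : SpanRoot T a b) : ∃ i, SpanRoot (Ts i) a b := by
  obtain ⟨i, hi⟩ := H.mem_Γ1.1 (SegIn.left_mem h)
  refine ⟨i, h.1, fun k hak => ?_⟩
  induction k, hak using Nat.le_induction with
  | base => exact fun _ => hi
  | succ k hak ih =>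
    intro hkb
    obtain ⟨j, hj⟩ := H.mem_Γ1.1 (h.2 (k + 1) (by omega) hkb)
    obtain rfl := H.eq_of_succ_mem_Γ1 (ih (by omega)) hj
    exact hj

lemma eq_of_spanRoot (hi : SpanRoot (Ts i) a b) (hj : SpanRoot (Ts j) a b) : i = j :=
  H.eq_of_mem_Γ1 (SegIn.left_mem hi) (SegIn.left_mem hj)

lemma spanRoot_component_of_segIn_Γ2 (h2 : SegIn (Ts i).Γ2 a b) (h : SpanRoot T a b) :
    SpanRoot (Ts i) a b :=
  ⟨h.1, fun k hk1 hk2 => H.mem_Γ1_of_mem_Γ2 i k (h2.2 k hk1 hk2) (h.2 k hk1 hk2)⟩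

lemma tauStep_iff (hp : SpanRoot (Ts i) p.1 p.2) : tauStep T p r ↔ tauStep (Ts i) p r := by
  have hsum : ∑ k ∈ Finset.Ico p.1 p.2, svec (T.τ k)
      = ∑ k ∈ Finset.Ico p.1 p.2, svec ((Ts i).τ k) :=
    Finset.sum_congr rfl fun k hk => by
      rw [H.τ_eq i k (hp.2 k (Finset.mem_Ico.1 hk).1 (Finset.mem_Ico.1 hk).2)]
  simp only [tauStep, hsum, H.spanRoot_of_component hp, hp, true_and]

lemma precK_iff : ∀ k {p r : ℕ × ℕ}, SpanRoot (Ts i) p.1 p.2 →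
    (precK T k p r ↔ precK (Ts i) k p r)
  | 0, _, _, _ => Iff.rfl
  | k + 1, _, _, hp => exists_congr fun m => by
    rw [H.tauStep_iff hp]
    refine and_congr_right fun hstep => ?_
    cases k with
    | zero => exact Iff.rfl
    | succ k =>
      exact ⟨fun h => (precK_iff (k + 1) (H.spanRoot_component_of_segIn_Γ2
          hstep.segIn_Γ2 h.spanRoot)).1 h, fun h => (precK_iff (k + 1) h.spanRoot).2 h⟩

lemma precK_succ_iff {k : ℕ} : precK T (k + 1) p r ↔ ∃ i, precK (Ts i) (k + 1) p r := by
  refine ⟨fun h => ?_, fun ⟨i, h⟩ => (H.precK_iff (k + 1) h.spanRoot).2 h⟩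
  obtain ⟨i, hi⟩ := H.exists_spanRoot_component h.spanRoot
  exact ⟨i, (H.precK_iff (k + 1) hi).1 h⟩

lemma prec_iff : prec T p r ↔ ∃ i, prec (Ts i) p r := by
  simp only [prec, H.precK_succ_iff]
  exact exists_comm

lemma prec_iff_of_spanRoot (hp : SpanRoot (Ts i) p.1 p.2) : prec T p r ↔ prec (Ts i) p r :=
  exists_congr fun k => H.precK_iff (k + 1) hp

lemma prec_iff_of_prec {g : ℕ × ℕ} (hpg : prec (Ts i) p g) : prec T g r ↔ prec (Ts i) g r :=
  ⟨fun h => (H.prec_iff_of_spanRoot (H.spanRoot_component_of_segIn_Γ2 hpg.segIn_Γ2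
    h.spanRoot)).1 h, fun h => (H.prec_iff_of_spanRoot h.spanRoot).2 h⟩

lemma iterate_τ_eq : ∀ {k : ℕ} {p r : ℕ × ℕ}, precK (Ts i) k p r →
    ∀ v ∈ Finset.Ico p.1 p.2, T.τ^[k] v = (Ts i).τ^[k] v
  | 0, _, _, _, _, _ => rfl
  | _ + 1, _, _, ⟨_, hstep, hrest⟩, v, hv => by
    rw [Function.iterate_succ_apply, Function.iterate_succ_apply,
      H.τ_eq i v (hstep.1.2 v (Finset.mem_Ico.1 hv).1 (Finset.mem_Ico.1 hv).2)]
    exact iterate_τ_eq hrest _ (hstep.image_eq ▸ Finset.mem_image_of_mem _ hv)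

lemma revOri_iff (hp : SpanRoot (Ts i) p.1 p.2) : RevOri T p r ↔ RevOri (Ts i) p r := by
  refine exists_congr fun k => ?_
  rw [H.precK_iff (k + 1) hp]
  exact and_congr_right fun h => by
    rw [H.iterate_τ_eq h p.1 (Finset.mem_Ico.2 ⟨le_rfl, hp.1⟩)]

lemma sgn_eq (hp : SpanRoot (Ts i) p.1 p.2) : sgn T p r = sgn (Ts i) p r := by
  simp only [sgn, H.revOri_iff hp]

lemma Kc_eq (hp : SpanRoot (Ts i) p.1 p.2) : Kc T p r = Kc (Ts i) p r := by
  have hmid (c : ℕ × ℕ → Prop) : (∃ g, prec T p g ∧ prec T g r ∧ c g)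
      ↔ ∃ g, prec (Ts i) p g ∧ prec (Ts i) g r ∧ c g :=
    exists_congr fun g => by
      rw [H.prec_iff_of_spanRoot hp]
      exact and_congr_right fun hpg => by rw [H.prec_iff_of_prec hpg]
  simp only [Kc, hmid, H.revOri_iff hp]

end IsOrthUnion

namespace IsOrthUnion

variable {ι : Type*} [Fintype ι] {Ts : ι → BDTriple n} {T : BDTriple n} (H : IsOrthUnion Ts T)
  {i j : ι} {p r : ℕ × ℕ}
include H

lemma eq_of_segIn_Γ1_of_mem {a b : ℕ} (h : SegIn (Ts i).Γ1 a b) (hb : b ∈ (Ts j).Γ1) : i = j :=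
  H.eq_of_succ_mem_Γ1 h.pred_right_mem (by rwa [Nat.sub_add_cancel (by have := h.1; omega)])

lemma eq_of_segIn_Γ2_of_mem {a b : ℕ} (h : SegIn (Ts i).Γ2 a b) (hb : b ∈ (Ts j).Γ2) : i = j :=
  H.eq_of_succ_mem_Γ2 h.pred_right_mem (by rwa [Nat.sub_add_cancel (by have := h.1; omega)])

lemma eq_of_prec {r' : ℕ × ℕ} (hi : prec (Ts i) p r) (hj : prec (Ts j) p r') : i = j :=
  H.eq_of_spanRoot hi.spanRoot hj.spanRoot

lemma mul_eq_zero_of_mem_baSubsemiring (hij : i ≠ j) {a b : MatT n}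
    (ha : a ∈ baSubsemiring (Ts i)) (hb : b ∈ baSubsemiring (Ts j)) : a * b = 0 :=
  SupportedOn.mul_eq_zero ha hb fun _ _ _ hxy hyz =>
    hij (H.eq_of_segIn_Γ2_of_mem hxy.1 hyz.1.left_mem)

lemma mul_RsQ_mul_swap21_eq_zero (q : ℝ) (hij : i ≠ j) {a b : MatT n}
    (ha : a ∈ baSubsemiring (Ts i)) (hb : b ∈ baSubsemiring (Ts j)) :
    a * RsQ n q * swap21 b = 0 := by
  refine (SupportedOn.mul ha (RsQ_supportedOn n q)
    (R := fun x w => ∃ z, BASupport (Ts i) x z ∧ (w = z ∨ w = z.swap))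
    fun _ z _ hxz hzw => ⟨z, hxz, hzw⟩).mul_eq_zero (supportedOn_swap21 hb) ?_
  rintro x w y ⟨z, hxz, rfl | rfl⟩ hwy
  · exact hij (H.eq_of_mem_Γ2_of_mem_Γ1 hxz.1.pred_right_mem hwy.2.pred_right_mem)
  · exact hij (H.eq_of_segIn_Γ2_of_mem hxz.1 hwy.1.left_mem)

lemma aMat_mul_aMat_eq_zero (hij : i ≠ j) : aMat (Ts i) * aMat (Ts j) = 0 := by
  refine (aMat_supportedOn _).mul_eq_zero (aMat_supportedOn _) fun x z y hxz hzy => ?_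
  rcases hxz with hxz | hxz <;> rcases hzy with hzy | hzy
  · exact hij (H.eq_of_segIn_Γ2_of_mem hxz.1 hzy.1.left_mem)
  · exact hij (H.eq_of_mem_Γ2_of_mem_Γ1 hzy.1.left_mem hxz.2.left_mem).symm
  · exact hij (H.eq_of_mem_Γ2_of_mem_Γ1 hzy.1.left_mem hxz.2.left_mem).symm
  · exact hij (H.eq_of_segIn_Γ1_of_mem hzy.2 hxz.2.left_mem).symm

lemma epsMat_apply_eq_zero (hji : j ≠ i) {x y : Fin n × Fin n} (hxy : BASupport (Ts i) x y) :
    epsMat (Ts j) x y = 0 := by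
  have ha := aMat_supportedOn (Ts j)
  have h1 : (aMat (Ts j) * rsMat n) x y = 0 :=
    ha.mul_apply_eq_zero (rsMat_supportedOn n) fun z hxz hzy => by
      subst hzy
      rcases hxz with h | h
      · exact hji (H.eq_of_mem_Γ2 h.1.left_mem hxy.1.left_mem)
      · exact hji (H.eq_of_mem_Γ1 h.2.left_mem hxy.2.left_mem)
  have h2 : (rsMat n * aMat (Ts j)) x y = 0 :=
    (rsMat_supportedOn n).mul_apply_eq_zero ha fun z hxz hzy => by
      subst hxz
      rcases hzy with h | h
      · exact hji (H.eq_of_mem_Γ1 h.2.left_mem hxy.2.left_mem)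
      · exact hji (H.eq_of_mem_Γ2 h.1.left_mem hxy.1.left_mem)
  have h3 : (aMat (Ts j) * aMat (Ts j)) x y = 0 :=
    ha.mul_apply_eq_zero ha fun z hxz hzy => by
      rcases hxz with h | h
      · exact hji (H.eq_of_mem_Γ2 h.1.left_mem hxy.1.left_mem)
      rcases hzy with h' | h'
      · exact hji (H.eq_of_mem_Γ1 h'.2.left_mem hxy.2.left_mem)
      · have hxz : (x.2 : ℕ) < z.2 := h.1.1
        have hzy : (z.2 : ℕ) < y.2 := h'.1.1
        have hyx : (y.2 : ℕ) < x.2 := hxy.2.1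
        omega
  simp only [epsMat, Matrix.add_apply, h1, h2, h3, add_zero]

lemma coeffBA_epsMat_eq_zero (hji : j ≠ i) (h : prec (Ts i) p r) :
    coeffBA (epsMat (Ts j)) p r = 0 := by
  simp only [coeffBA, entry]
  split_ifs
  · exact H.epsMat_apply_eq_zero hji ⟨h.segIn_Γ2, h.spanRoot⟩
  · rfl

lemma aMat_eq_sum : aMat T = ∑ i, aMat (Ts i) :=
  sumRoots_ite_eq_sum (fun _ _ => H.prec_iff) (fun _ _ _ _ => H.eq_of_prec)
    fun _ _ _ h => by rw [H.sgn_eq h.spanRoot]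

lemma epsMat_eq_sum : epsMat T = ∑ i, epsMat (Ts i) := by
  have hsq : (∑ i, aMat (Ts i)) * ∑ i, aMat (Ts i) = ∑ i, aMat (Ts i) * aMat (Ts i) :=
    sum_mul_sum_of_mul_eq_zero fun _ _ => H.aMat_mul_aMat_eq_zero
  simp only [epsMat]
  rw [H.aMat_eq_sum, hsq, Finset.sum_mul, Finset.mul_sum, ← Finset.sum_add_distrib,
    ← Finset.sum_add_distrib]

lemma coeffBA_epsMat_eq (h : prec (Ts i) p r) :
    coeffBA (epsMat T) p r = coeffBA (epsMat (Ts i)) p r := by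
  rw [H.epsMat_eq_sum, coeffBA_sum,
    Fintype.sum_eq_single i fun j hj => H.coeffBA_epsMat_eq_zero hj h]

lemma RbarGGS_sub_RsQ_eq_sum (q : ℝ) :
    RbarGGS q T - RsQ n q = ∑ i, (RbarGGS q (Ts i) - RsQ n q) := by
  simp only [RbarGGS, add_sub_cancel_left, ← Finset.smul_sum]
  congr 1
  exact sumRoots_ite_eq_sum (fun _ _ => H.prec_iff) (fun _ _ _ _ => H.eq_of_prec)
    fun _ _ _ h => by rw [H.sgn_eq h.spanRoot, H.coeffBA_epsMat_eq h]

lemma Jlevel_sub_one_eq_sum (q : ℝ) (l : ℕ) :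
    Jlevel q T (l + 1) - 1 = ∑ i, (Jlevel q (Ts i) (l + 1) - 1) := by
  simp only [Jlevel, add_sub_cancel_left]
  exact sumRoots_ite_eq_sum (fun _ _ => H.precK_succ_iff)
    (fun _ _ _ _ hi hj => H.eq_of_spanRoot hi.spanRoot hj.spanRoot)
    fun _ _ _ h => by rw [H.sgn_eq h.spanRoot, H.Kc_eq h.spanRoot]

lemma Jmat_eq_one_add_sum (q : ℝ) : Jmat q T = 1 + ∑ i, (Jmat q (Ts i) - 1) := by
  have := list_prod_map_one_add_sum (S := fun i => baSubsemiring (Ts i))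
    (fun _ _ hij _ ha _ hb => H.mul_eq_zero_of_mem_baSubsemiring hij ha hb)
    (L := List.range n) (f := fun i l => Jlevel q (Ts i) (l + 1) - 1)
    fun i l _ => Jlevel_sub_one_mem q (Ts i) l
  simpa [Jmat, ← H.Jlevel_sub_one_eq_sum] using this

lemma RbarJ_sub_RsQ_eq_sum (q : ℝ) :
    RbarJ q T - RsQ n q = ∑ i, (RbarJ q (Ts i) - RsQ n q) := by
  set N := fun i => Jmat q (Ts i) - 1
  have hdet i : IsUnit (Jmat q (Ts i)).det :=
    (Matrix.isUnit_iff_isUnit_det _).1 (isUnit_Jmat q (Ts i))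
  have hinv : (Jmat q T)⁻¹ = 1 + ∑ i, ((Jmat q (Ts i))⁻¹ - 1) := by
    refine Matrix.inv_eq_right_inv ?_
    rw [H.Jmat_eq_one_add_sum]
    exact one_add_sum_mul_one_add_sum_eq_one (fun i => by simp [Matrix.mul_nonsing_inv _ (hdet i)])
      fun i j hij => H.mul_eq_zero_of_mem_baSubsemiring hij (Jmat_sub_one_mem q _)
        (Jmat_sub_one_mem q _)
  have hswap : swap21 (Jmat q T) = 1 + ∑ i, (swap21 (Jmat q (Ts i)) - 1) := by
    simp only [H.Jmat_eq_one_add_sum, swap21_eq_reindexAlgEquiv, map_add, map_one, map_sum,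
      map_sub]
  rw [RbarJ, hinv, hswap, one_add_sum_mul_mul_one_add_sum_sub _ (x := N)
    (fun i => by simp [N, Matrix.nonsing_inv_mul _ (hdet i)]) fun i j hij => ?_]
  · simp [RbarJ]
  · have hsub : swap21 (Jmat q (Ts j)) - 1 = swap21 (N j) := by
      simp only [N, swap21_eq_reindexAlgEquiv, map_sub, map_one]
    rw [hsub]
    exact H.mul_RsQ_mul_swap21_eq_zero q hij (Jmat_sub_one_mem q _) (Jmat_sub_one_mem q _)

end IsOrthUnion

theorem stmt_8_general {n : ℕ} (q : ℝ)
    {ι : Type*} [Fintype ι] (Ts : ι → BDTriple n) (T : BDTriple n)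
    (hc1 : T.Γ1 = Finset.univ.biUnion fun i => (Ts i).Γ1)
    (htau : ∀ i, ∀ s ∈ (Ts i).Γ1, T.τ s = (Ts i).τ s)
    (horth1 : ∀ i j, i ≠ j → ∀ s ∈ (Ts i).Γ1, ∀ t ∈ (Ts j).Γ1,
      ipn n (svec s) (svec t) = 0)
    (horth2 : ∀ i j, i ≠ j → ∀ s ∈ (Ts i).Γ2, ∀ t ∈ (Ts j).Γ2,
      ipn n (svec s) (svec t) = 0)
    (htorth : ∀ i, ∀ s ∈ (Ts i).Γ2, s ∈ T.Γ1 → s ∈ (Ts i).Γ1) :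
    RbarGGS q T - RsQ n q = ∑ i, (RbarGGS q (Ts i) - RsQ n q) ∧
    RbarJ q T - RsQ n q = ∑ i, (RbarJ q (Ts i) - RsQ n q) := by
  have H : IsOrthUnion Ts T := ⟨hc1, htau, horth1, horth2, htorth⟩
  exact ⟨H.RbarGGS_sub_RsQ_eq_sum q, H.RbarJ_sub_RsQ_eq_sum q⟩

/-- for a τ-orthogonal union, `R̄_GGS − R_s = Σ_i (R̄⁽ⁱ⁾_GGS − R_s)` and
`R̄_J − R_s = Σ_i (R̄⁽ⁱ⁾_J − R_s)`. -/
theorem stmt_8 {n : ℕ} (hn : 2 ≤ n) (q : ℝ) (hq : 0 < q) (hq1 : q ≠ 1)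
    {ι : Type*} [Fintype ι] (Ts : ι → BDTriple n) (T : BDTriple n)
    (hc1 : T.Γ1 = Finset.univ.biUnion fun i => (Ts i).Γ1)
    (hc2 : T.Γ2 = Finset.univ.biUnion fun i => (Ts i).Γ2)
    (htau : ∀ i, ∀ s ∈ (Ts i).Γ1, T.τ s = (Ts i).τ s)
    (horth1 : ∀ i j, i ≠ j → ∀ s ∈ (Ts i).Γ1, ∀ t ∈ (Ts j).Γ1,
      ipn n (svec s) (svec t) = 0)
    (horth2 : ∀ i j, i ≠ j → ∀ s ∈ (Ts i).Γ2, ∀ t ∈ (Ts j).Γ2,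
      ipn n (svec s) (svec t) = 0)
    (htorth : ∀ i, ∀ s ∈ (Ts i).Γ2, s ∈ T.Γ1 → s ∈ (Ts i).Γ1) :
    RbarGGS q T - RsQ n q = ∑ i, (RbarGGS q (Ts i) - RsQ n q) ∧
    RbarJ q T - RsQ n q = ∑ i, (RbarJ q (Ts i) - RsQ n q) :=
  stmt_8_general q Ts T hc1 htau horth1 horth2 htorth

end
end GGS
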